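/- Let x ∈ ℝ², let A be an invertible real 2×2 matrix, and let ξ ∈ D_T. Then, for almost every (ω, ω₃) ∈ ℝ² × ℝ, (σ₂[x,A] (T (σ₂[−A⁻¹x, A⁻¹] ξ)))(ω, ω₃) = |det A|^{−1/2} · ‖ω‖⁻¹ · |ω₃|^{−1/2} · ξ(ω, ω₃). In other words, σ₂[x,A] T σ₂[x,A]* = Δ_{G₂}[x,A]^{1/2} · T, where σ₂[x,A]* = σ₂[x,A]⁻¹ = σ₂[−A⁻¹x, A⁻¹] and Δ_{G₂}[x,A] = |det A|⁻¹; i.e., T is semi-invariant with weight Δ_{G₂}^{1/2} for σ₂. -/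

import Mathlib

open MeasureTheory Matrix
open scoped ENNReal

noncomputable section

/-- `‖ω‖²`, the squared Euclidean norm of the row vector `ω`. -/
def nsq (ω : Fin 2 → ℝ) : ℝ := ω 0 ^ 2 + ω 1 ^ 2

/-- `u_{ω,A}` for a row vector `ω = (ω 0, ω 1)` and a matrix
`A = [[a, b], [c, d]] = [[A 0 0, A 0 1], [A 1 0, A 1 1]]`. -/
def uu (ω : Fin 2 → ℝ) (A : Matrix (Fin 2) (Fin 2) ℝ) : ℝ :=
  ((A 0 0 * A 1 0 + A 0 1 * A 1 1) * (ω 0 ^ 2 - ω 1 ^ 2)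
      - (A 0 0 ^ 2 + A 0 1 ^ 2 - A 1 0 ^ 2 - A 1 1 ^ 2) * (ω 0 * ω 1))
    / ((A 0 0 * ω 0 + A 1 0 * ω 1) ^ 2 + (A 0 1 * ω 0 + A 1 1 * ω 1) ^ 2)

/-- `v_{ω,A}`. -/
def vv (ω : Fin 2 → ℝ) (A : Matrix (Fin 2) (Fin 2) ℝ) : ℝ :=
  ((A 0 0 * A 1 1 - A 0 1 * A 1 0) * (ω 0 ^ 2 + ω 1 ^ 2))
    / ((A 0 0 * ω 0 + A 1 0 * ω 1) ^ 2 + (A 0 1 * ω 0 + A 1 1 * ω 1) ^ 2)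

/-- The operator `σ₂[x,A]` on functions of `(ω, ω₃) ∈ ℝ² × ℝ`:
`(σ₂[x,A]ξ)(ω, ω₃) = (|det A|·‖ω‖/‖ωA‖)·e^{2πi(ω·x + ω₃·u_{ω,A})}·ξ(ωA, ω₃·v_{ω,A})`. -/
def sigma2 (x : Fin 2 → ℝ) (A : Matrix (Fin 2) (Fin 2) ℝ)
    (ξ : (Fin 2 → ℝ) × ℝ → ℂ) : (Fin 2 → ℝ) × ℝ → ℂ := fun p =>
  (((|A.det| * Real.sqrt (nsq p.1) / Real.sqrt (nsq (vecMul p.1 A))) : ℝ) : ℂ)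
    * Complex.exp (((2 * Real.pi * (p.1 0 * x 0 + p.1 1 * x 1 + p.2 * uu p.1 A)) : ℝ) * Complex.I)
    * ξ (vecMul p.1 A, p.2 * vv p.1 A)

/-- The multiplication operator `(Tξ)(ω, ω₃) = ‖ω‖⁻¹·|ω₃|^{−1/2}·ξ(ω, ω₃)`. -/
def Tmul (ξ : (Fin 2 → ℝ) × ℝ → ℂ) : (Fin 2 → ℝ) × ℝ → ℂ := fun p =>
  ((((Real.sqrt (nsq p.1))⁻¹ * (Real.sqrt |p.2|)⁻¹) : ℝ) : ℂ) * ξ p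


/-!
`u` and `v` are cocycles for the right action `ω ↦ ωA`:
`u_{ω,AB} = u_{ω,A} + v_{ω,A} u_{ωA,B}` and `v_{ω,AB} = v_{ω,A} v_{ωA,B}`, which makes `σ₂` a
representation with `σ₂[x,A]⁻¹ = σ₂[-A⁻¹x, A⁻¹]`. Inserting `T` between the two factors therefore
only contributes the weight of `T` at the intermediate point `(ωA, ω₃ v_{ω,A})`, and since
`v_{ω,A} = det A · ‖ω‖² / ‖ωA‖²` this weight is `|det A|^{-1/2}` times the weight of `T` at
`(ω, ω₃)`. The identity holds at every `ω ≠ 0`, hence almost everywhere.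
-/

lemma vecMul_fin_two_apply {α : Type*} [NonUnitalNonAssocSemiring α] (ω : Fin 2 → α)
    (A : Matrix (Fin 2) (Fin 2) α) (j : Fin 2) :
    vecMul ω A j = ω 0 * A 0 j + ω 1 * A 1 j := by
  simp [vecMul, vec2_dotProduct]

lemma nsq_eq_dotProduct (ω : Fin 2 → ℝ) : nsq ω = ω ⬝ᵥ ω := by
  rw [vec2_dotProduct, nsq]; ring

lemma nsq_nonneg (ω : Fin 2 → ℝ) : 0 ≤ nsq ω := by
  rw [nsq]; positivity

lemma nsq_eq_zero_iff {ω : Fin 2 → ℝ} : nsq ω = 0 ↔ ω = 0 := by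
  rw [nsq_eq_dotProduct, dotProduct_self_eq_zero]

lemma nsq_pos {ω : Fin 2 → ℝ} (hω : ω ≠ 0) : 0 < nsq ω :=
  (nsq_nonneg ω).lt_of_ne' (nsq_eq_zero_iff.not.mpr hω)

lemma nsq_vecMul (ω : Fin 2 → ℝ) (A : Matrix (Fin 2) (Fin 2) ℝ) :
    nsq (vecMul ω A) = (A 0 0 * ω 0 + A 1 0 * ω 1) ^ 2 + (A 0 1 * ω 0 + A 1 1 * ω 1) ^ 2 := by
  simp only [nsq, vecMul_fin_two_apply]; ring

lemma vv_eq_det_mul_nsq_div (ω : Fin 2 → ℝ) (A : Matrix (Fin 2) (Fin 2) ℝ) :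
    vv ω A = A.det * nsq ω / nsq (vecMul ω A) := by
  rw [vv, nsq_vecMul, det_fin_two, nsq]

lemma uu_eq_dotProduct_div (ω : Fin 2 → ℝ) (A : Matrix (Fin 2) (Fin 2) ℝ) :
    uu ω A = vecMul ω A ⬝ᵥ vecMul ![-ω 1, ω 0] A / nsq (vecMul ω A) := by
  rw [uu, nsq_vecMul, vec2_dotProduct]
  simp only [vecMul_fin_two_apply, cons_val_zero, cons_val_one]
  ring

lemma vv_one {ω : Fin 2 → ℝ} (hω : ω ≠ 0) : vv ω 1 = 1 := by
  rw [vv_eq_det_mul_nsq_div, det_one, one_mul, vecMul_one, div_self (nsq_pos hω).ne']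

lemma uu_one (ω : Fin 2 → ℝ) : uu ω 1 = 0 := by
  simp [uu]

lemma vv_mul (ω : Fin 2 → ℝ) (A B : Matrix (Fin 2) (Fin 2) ℝ) :
    vv ω (A * B) = vv ω A * vv (vecMul ω A) B := by
  simp only [vv_eq_det_mul_nsq_div, det_mul, ← vecMul_vecMul]
  rcases eq_or_ne (nsq (vecMul ω A)) 0 with h | h
  · rw [nsq_eq_zero_iff.mp h, zero_vecMul]; simp [nsq]
  · field_simp

lemma uu_mul {ω : Fin 2 → ℝ} {A B : Matrix (Fin 2) (Fin 2) ℝ} (h : vecMul ω (A * B) ≠ 0) :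
    uu ω (A * B) = uu ω A + vv ω A * uu (vecMul ω A) B := by
  rw [← vecMul_vecMul] at h
  have hA : nsq (vecMul ω A) ≠ 0 := by
    refine nsq_eq_zero_iff.not.mpr fun h0 => h ?_
    rw [h0, zero_vecMul]
  have hAB : nsq (vecMul (vecMul ω A) B) ≠ 0 := nsq_eq_zero_iff.not.mpr h
  rw [uu_eq_dotProduct_div, uu_eq_dotProduct_div, uu_eq_dotProduct_div (vecMul ω A),
    vv_eq_det_mul_nsq_div, ← vecMul_vecMul, ← vecMul_vecMul]
  field_simp
  simp only [nsq, det_fin_two, vec2_dotProduct, vecMul_fin_two_apply, cons_val_zero, cons_val_one]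
  ring

lemma vv_mul_vv_inv {ω : Fin 2 → ℝ} {A : Matrix (Fin 2) (Fin 2) ℝ} (hA : A.det ≠ 0)
    (hω : ω ≠ 0) : vv ω A * vv (vecMul ω A) A⁻¹ = 1 := by
  rw [← vv_mul, mul_nonsing_inv A hA.isUnit, vv_one hω]

lemma uu_add_vv_mul_uu_inv {ω : Fin 2 → ℝ} {A : Matrix (Fin 2) (Fin 2) ℝ} (hA : A.det ≠ 0)
    (hω : ω ≠ 0) : uu ω A + vv ω A * uu (vecMul ω A) A⁻¹ = 0 := by
  have hAA : A * A⁻¹ = 1 := mul_nonsing_inv A hA.isUnit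
  rw [← uu_mul (by rwa [hAA, vecMul_one]), hAA, uu_one]

lemma sigma2_Tmul_sigma2_apply (x y : Fin 2 → ℝ) (A B : Matrix (Fin 2) (Fin 2) ℝ)
    (ξ : (Fin 2 → ℝ) × ℝ → ℂ) (ω : Fin 2 → ℝ) (t : ℝ) :
    sigma2 x A (Tmul (sigma2 y B ξ)) (ω, t)
      = ((|A.det| * Real.sqrt (nsq ω) / Real.sqrt (nsq (vecMul ω A))
          * ((Real.sqrt (nsq (vecMul ω A)))⁻¹ * (Real.sqrt |t * vv ω A|)⁻¹)
          * (|B.det| * Real.sqrt (nsq (vecMul ω A)) / Real.sqrt (nsq (vecMul ω (A * B))))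
          : ℝ) : ℂ)
        * Complex.exp (((2 * Real.pi * (ω ⬝ᵥ x + vecMul ω A ⬝ᵥ y
            + t * (uu ω A + vv ω A * uu (vecMul ω A) B))) : ℝ) * Complex.I)
        * ξ (vecMul ω (A * B), t * vv ω A * vv (vecMul ω A) B) := by
  have hphase : 2 * Real.pi * (ω ⬝ᵥ x + vecMul ω A ⬝ᵥ y
        + t * (uu ω A + vv ω A * uu (vecMul ω A) B))
      = 2 * Real.pi * (ω 0 * x 0 + ω 1 * x 1 + t * uu ω A)
        + 2 * Real.pi * (vecMul ω A 0 * y 0 + vecMul ω A 1 * y 1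
          + t * vv ω A * uu (vecMul ω A) B) := by
    rw [vec2_dotProduct, vec2_dotProduct]; ring
  rw [hphase, Complex.ofReal_add, add_mul, Complex.exp_add, ← vecMul_vecMul]
  simp only [sigma2, Tmul]
  push_cast
  ring

lemma sigma2_Tmul_sigma2_inv_apply (x : Fin 2 → ℝ) {A : Matrix (Fin 2) (Fin 2) ℝ}
    (hA : A.det ≠ 0) (ξ : (Fin 2 → ℝ) × ℝ → ℂ) {ω : Fin 2 → ℝ} (hω : ω ≠ 0) (t : ℝ) :
    sigma2 x A (Tmul (sigma2 (-(A⁻¹ *ᵥ x)) A⁻¹ ξ)) (ω, t)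
      = ((((Real.sqrt |A.det|)⁻¹ * (Real.sqrt (nsq ω))⁻¹ * (Real.sqrt |t|)⁻¹) : ℝ) : ℂ)
          * ξ (ω, t) := by
  have hAA : A * A⁻¹ = 1 := mul_nonsing_inv A hA.isUnit
  have hphase : ω ⬝ᵥ x + vecMul ω A ⬝ᵥ -(A⁻¹ *ᵥ x)
      + t * (uu ω A + vv ω A * uu (vecMul ω A) A⁻¹) = 0 := by
    rw [dotProduct_neg, dotProduct_mulVec, vecMul_vecMul, hAA, vecMul_one,
      uu_add_vv_mul_uu_inv hA hω]
    ring
  rw [sigma2_Tmul_sigma2_apply, hphase, hAA, vecMul_one, mul_assoc t, vv_mul_vv_inv hA hω,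
    mul_one, mul_zero, Complex.ofReal_zero, zero_mul, Complex.exp_zero, mul_one]
  congr 2
  have hN := nsq_pos hω
  have hM : 0 < nsq (vecMul ω A) :=
    nsq_pos fun h => hω (by rw [← vecMul_one ω, ← hAA, ← vecMul_vecMul, h, zero_vecMul])
  have hd : 0 < |A.det| := abs_pos.mpr hA
  rw [vv_eq_det_mul_nsq_div, abs_mul, abs_div, abs_mul, abs_of_pos hN, abs_of_pos hM,
    det_nonsing_inv, Ring.inverse_eq_inv', abs_inv, Real.sqrt_mul (abs_nonneg t),
    Real.sqrt_div' _ hM.le, Real.sqrt_mul hd.le]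
  have hsd := Real.sqrt_pos.mpr hd
  have hsN := Real.sqrt_pos.mpr hN
  have hsM := Real.sqrt_pos.mpr hM
  field_simp

theorem T_semi_invariant_general (x : Fin 2 → ℝ) (A : Matrix (Fin 2) (Fin 2) ℝ)
    (hA : A.det ≠ 0) (ξ : (Fin 2 → ℝ) × ℝ → ℂ) :
    ∀ᵐ p : (Fin 2 → ℝ) × ℝ ∂(volume : Measure ((Fin 2 → ℝ) × ℝ)),
      sigma2 x A (Tmul (sigma2 (-(A⁻¹.mulVec x)) A⁻¹ ξ)) p
        = ((((Real.sqrt |A.det|)⁻¹ * (Real.sqrt (nsq p.1))⁻¹ * (Real.sqrt |p.2|)⁻¹) : ℝ) : ℂ)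
            * ξ p := by
  have hfst : ∀ᵐ p : (Fin 2 → ℝ) × ℝ, p.1 ≠ 0 :=
    Measure.quasiMeasurePreserving_fst.ae (Measure.ae_ne volume 0)
  filter_upwards [hfst] with ⟨ω, t⟩ hω
  exact sigma2_Tmul_sigma2_inv_apply x hA ξ hω t

/-- Semi-invariance of `T` with weight `Δ_{G₂}^{1/2}`:
`σ₂[x,A] T σ₂[x,A]* ξ = |det A|^{−1/2} T ξ` for `ξ ∈ D_T`,
where `σ₂[x,A]* = σ₂[x,A]⁻¹ = σ₂[−A⁻¹x, A⁻¹]`. -/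
theorem T_semi_invariant (x : Fin 2 → ℝ) (A : Matrix (Fin 2) (Fin 2) ℝ)
    (hA : A.det ≠ 0) (ξ : (Fin 2 → ℝ) × ℝ → ℂ)
    (hξ : MemLp ξ 2 (volume : Measure ((Fin 2 → ℝ) × ℝ)))
    (hξT : ∫⁻ p : (Fin 2 → ℝ) × ℝ,
        (‖ξ p‖₊ : ℝ≥0∞) ^ 2 * ENNReal.ofReal (nsq p.1 * |p.2|)⁻¹ < ⊤) :
    ∀ᵐ p : (Fin 2 → ℝ) × ℝ ∂(volume : Measure ((Fin 2 → ℝ) × ℝ)),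
      sigma2 x A (Tmul (sigma2 (-(A⁻¹.mulVec x)) A⁻¹ ξ)) p
        = ((((Real.sqrt |A.det|)⁻¹ * (Real.sqrt (nsq p.1))⁻¹ * (Real.sqrt |p.2|)⁻¹) : ℝ) : ℂ)
            * ξ p :=
  T_semi_invariant_general x A hA ξ
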